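/- arXiv:1608.05997 — 2 statements merged into one kernel-verified Lean document; each statement's English description precedes it below -/
import Mathlib

section
/- (Appendix, equation (12c).) For every subcarrier p ∈ {0,…,N−1}, E[ conj(h̄(p)) · H̄^{ISI}_{pp} ] = τ_av/N. -/
open Finset MeasureTheory

/-- Frequency-domain channel coefficient `h̄(p) = ∑_{ℓ=0}^{L-1} h(ℓ)·e^{-2πiℓp/N}`. -/
noncomputable def hBar {Ω : Type*} (N L : ℕ) (h : ℕ → Ω → ℂ) (p : ℕ) (ω : Ω) : ℂ :=
  ∑ ℓ ∈ range L, h ℓ ω *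
    Complex.exp (-(2 * (Real.pi : ℂ) * Complex.I * (ℓ : ℂ) * (p : ℂ)) / (N : ℂ))

/-- Frequency-domain ISI matrix entry
`H̄^{ISI}_{pq} = (1/N)·∑_{n=0}^{N-1} ∑_{ℓ=0}^{L-1} h(ℓ)·e^{2πi(nq-ℓq-np)/N}·𝟙[n < ℓ]`. -/
noncomputable def Hisi {Ω : Type*} (N L : ℕ) (h : ℕ → Ω → ℂ) (p q : ℕ) (ω : Ω) : ℂ :=
  (1 / (N : ℂ)) * ∑ n ∈ range N, ∑ ℓ ∈ range L,
    h ℓ ω * Complex.exp (2 * (Real.pi : ℂ) * Complex.I *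
      ((((n * q : ℕ) : ℤ) - ((ℓ * q : ℕ) : ℤ) - ((n * p : ℕ) : ℤ) : ℤ) : ℂ) / (N : ℂ)) *
    (if n < ℓ then 1 else 0)


/-! Expanding both factors in the taps, the cross terms vanish because the taps are uncorrelated,
so only `∑ ℓ ρ(ℓ) · conj(w_ℓ) · c_ℓ` survives, where `w_ℓ = e^{-2πiℓp/N}` is the weight of tap `ℓ`
in `h̄(p)` and `c_ℓ` its weight in `H̄^{ISI}_{pp}`. On the diagonal `q = p` the phase of the ISI
kernel no longer depends on `n`, so `c_ℓ = (1/N) · #{n < N : n < ℓ} · w_ℓ = (ℓ/N) · w_ℓ` (this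
uses `ℓ < L ≤ N`), and `|w_ℓ| = 1` leaves `∑ ℓ ρ(ℓ) ℓ / N = τ_av / N`. -/

open ComplexConjugate

theorem integral_conj_sum_mul_sum_of_uncorrelated {Ω ι : Type*} [MeasurableSpace Ω]
    [DecidableEq ι] {μ : Measure Ω} (s : Finset ι) (h : ι → Ω → ℂ) (a b ρ : ι → ℂ)
    (hint : ∀ i ∈ s, ∀ j ∈ s, Integrable (fun ω => h i ω * conj (h j ω)) μ)
    (hcov : ∀ i ∈ s, ∀ j ∈ s,
      ∫ ω, h i ω * conj (h j ω) ∂μ = if i = j then ρ i else 0) :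
    ∫ ω, conj (∑ j ∈ s, h j ω * a j) * ∑ i ∈ s, h i ω * b i ∂μ
      = ∑ i ∈ s, conj (a i) * b i * ρ i := by
  have hexpand : ∀ ω, conj (∑ j ∈ s, h j ω * a j) * ∑ i ∈ s, h i ω * b i
      = ∑ j ∈ s, ∑ i ∈ s, conj (a j) * b i * (h i ω * conj (h j ω)) := by
    intro ω
    simp only [map_sum, map_mul, sum_mul_sum]
    exact sum_congr rfl fun j _ => sum_congr rfl fun i _ => by ring
  have hint' : ∀ j ∈ s, ∀ i ∈ s,
      Integrable (fun ω => conj (a j) * b i * (h i ω * conj (h j ω))) μ :=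
    fun j hj i hi => (hint i hi j hj).const_mul _
  simp_rw [hexpand]
  rw [integral_finsetSum _ fun j hj => integrable_finsetSum _ (hint' j hj)]
  refine sum_congr rfl fun j hj => ?_
  rw [integral_finsetSum _ (hint' j hj)]
  simp only [integral_const_mul]
  rw [sum_congr rfl fun i hi => congrArg _ (hcov i hi j hj)]
  simp [hj]

theorem sum_range_ite_lt {R : Type*} [AddCommMonoidWithOne R] {ℓ N : ℕ} (hℓN : ℓ ≤ N) :
    ∑ n ∈ range N, (if n < ℓ then (1 : R) else 0) = ℓ := by
  have hfilter : (range N).filter (· < ℓ) = range ℓ := by ext; simp; omega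
  simp [sum_boole, hfilter]

noncomputable def dftWeight (N ℓ p : ℕ) : ℂ :=
  Complex.exp (-(2 * (Real.pi : ℂ) * Complex.I * (ℓ : ℂ) * (p : ℂ)) / (N : ℂ))

theorem conj_dftWeight_mul_self (N ℓ p : ℕ) : conj (dftWeight N ℓ p) * dftWeight N ℓ p = 1 := by
  rw [dftWeight, ← Complex.exp_conj, ← Complex.exp_add, ← Complex.exp_zero]
  congr 1
  simp only [map_div₀, map_neg, map_mul, Complex.conj_I, Complex.conj_ofNat,
    Complex.conj_natCast, Complex.conj_ofReal]
  ring

theorem hBar_eq {Ω : Type*} (N L : ℕ) (h : ℕ → Ω → ℂ) (p : ℕ) (ω : Ω) :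
    hBar N L h p ω = ∑ ℓ ∈ range L, h ℓ ω * dftWeight N ℓ p :=
  rfl

theorem Hisi_diag_eq {Ω : Type*} {N L : ℕ} (hLN : L ≤ N) (h : ℕ → Ω → ℂ) (p : ℕ) (ω : Ω) :
    Hisi N L h p p ω = ∑ ℓ ∈ range L, h ℓ ω * ((ℓ : ℂ) / N * dftWeight N ℓ p) := by
  have hphase : ∀ n ℓ : ℕ, Complex.exp (2 * (Real.pi : ℂ) * Complex.I *
      ((((n * p : ℕ) : ℤ) - ((ℓ * p : ℕ) : ℤ) - ((n * p : ℕ) : ℤ) : ℤ) : ℂ) / (N : ℂ))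
      = dftWeight N ℓ p := by
    intro n ℓ
    rw [dftWeight]
    congr 1
    push_cast
    ring
  simp only [Hisi, hphase]
  rw [sum_comm, mul_sum]
  refine sum_congr rfl fun ℓ hℓ => ?_
  have hcount := sum_range_ite_lt (R := ℂ) (N := N) ((mem_range.mp hℓ).le.trans hLN)
  simp only [mul_assoc, ← mul_sum, hcount]
  ring

theorem stmt3_general {Ω : Type*} [MeasurableSpace Ω] (μ : Measure Ω)
    (N L : ℕ) (hLN : L ≤ N)
    (ρ : ℕ → ℝ)
    (h : ℕ → Ω → ℂ)
    (hint : ∀ ℓ ℓ', ℓ < L → ℓ' < L →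
      Integrable (fun ω => h ℓ ω * (starRingEnd ℂ) (h ℓ' ω)) μ)
    (hcov : ∀ ℓ ℓ', ℓ < L → ℓ' < L →
      ∫ ω, h ℓ ω * (starRingEnd ℂ) (h ℓ' ω) ∂μ = if ℓ = ℓ' then ((ρ ℓ : ℝ) : ℂ) else 0)
    (p : ℕ) :
    ∫ ω, (starRingEnd ℂ) (hBar N L h p ω) * Hisi N L h p p ω ∂μ
      = ((∑ ℓ ∈ range L, (ℓ : ℝ) * ρ ℓ : ℝ) : ℂ) / (N : ℂ) := by
  simp only [hBar_eq, Hisi_diag_eq hLN]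
  rw [integral_conj_sum_mul_sum_of_uncorrelated (range L) h _ _ (fun ℓ => (ρ ℓ : ℂ))
    (fun i hi j hj => hint i j (mem_range.mp hi) (mem_range.mp hj))
    (fun i hi j hj => hcov i j (mem_range.mp hi) (mem_range.mp hj))]
  push_cast
  rw [sum_div]
  refine sum_congr rfl fun ℓ _ => ?_
  linear_combination ((ℓ : ℂ) / N * ρ ℓ) * conj_dftWeight_mul_self N ℓ p

/-- Appendix, equation (12c): `E[conj(h̄(p)) · H̄^{ISI}_{pp}] = τ_av/N`. -/
theorem stmt3 {Ω : Type*} [MeasurableSpace Ω] (μ : Measure Ω) [IsProbabilityMeasure μ]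
    (N L : ℕ) (hL1 : 1 ≤ L) (hLN : L ≤ N)
    (ρ : ℕ → ℝ) (hnn : ∀ ℓ, 0 ≤ ρ ℓ) (hsum : ∑ ℓ ∈ range L, ρ ℓ = 1)
    (h : ℕ → Ω → ℂ)
    (hint : ∀ ℓ ℓ', ℓ < L → ℓ' < L →
      Integrable (fun ω => h ℓ ω * (starRingEnd ℂ) (h ℓ' ω)) μ)
    (hmean : ∀ ℓ, ℓ < L → ∫ ω, h ℓ ω ∂μ = 0)
    (hcov : ∀ ℓ ℓ', ℓ < L → ℓ' < L →
      ∫ ω, h ℓ ω * (starRingEnd ℂ) (h ℓ' ω) ∂μ = if ℓ = ℓ' then ((ρ ℓ : ℝ) : ℂ) else 0)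
    (p : ℕ) (hp : p < N) :
    ∫ ω, (starRingEnd ℂ) (hBar N L h p ω) * Hisi N L h p p ω ∂μ
      = ((∑ ℓ ∈ range L, (ℓ : ℝ) * ρ ℓ : ℝ) : ℂ) / (N : ℂ) :=
  stmt3_general μ N L hLN ρ h hint hcov p
end

section
/- (Almost-sure convergence of the diagonal combining coefficient, equation (11a) with (12a).) Fix a subcarrier p ∈ {0,…,N−1}. For each antenna index m ∈ ℕ, define Y_m = conj(h̄_m(p)) · H̄^{ICI}_{m,pp}, and assume Y_0 is integrable. Then (1/M)·Σ_{m=0}^{M−1} Y_m converges almost surely to 1 − τ_av/N as M → ∞. -/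
/-!
`Y_m` is one fixed Borel function of the tap vector `h_m`, so the `Y_m` are i.i.d. and the strong
law of large numbers gives convergence to `E[Y_0]`. For `q = p` the ICI phase `e^{2πi(np-ℓp-np)/N}`
does not depend on `n`, so `H̄^{ICI}_{pp} = ∑_ℓ (N - ℓ)/N · h(ℓ) e^{-2πiℓp/N}`, and since the taps
are uncorrelated only the diagonal terms survive in `E[Y_0] = ∑_ℓ (N - ℓ)/N · ρ(ℓ) = 1 - τ_av/N`.
-/

open Finset MeasureTheory ProbabilityTheory Filter

/-- Frequency-domain ICI matrix entry
`H̄^{ICI}_{m,pq} = (1/N)·∑_{n=0}^{N-1} ∑_{ℓ=0}^{L-1} h_m(ℓ)·e^{2πi(nq-ℓq-np)/N}·𝟙[ℓ ≤ n]`. -/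
noncomputable def Hici {Ω : Type*} (N L : ℕ) (h : ℕ → Ω → ℂ) (p q : ℕ) (ω : Ω) : ℂ :=
  (1 / (N : ℂ)) * ∑ n ∈ range N, ∑ ℓ ∈ range L,
    h ℓ ω * Complex.exp (2 * (Real.pi : ℂ) * Complex.I *
      ((((n * q : ℕ) : ℤ) - ((ℓ * q : ℕ) : ℤ) - ((n * p : ℕ) : ℤ) : ℤ) : ℂ) / (N : ℂ)) *
    (if ℓ ≤ n then 1 else 0)

open ComplexConjugate Topology

theorem ae_tendsto_average_comp {Ω E F : Type*} [MeasurableSpace Ω] {μ : Measure Ω}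
    [MeasurableSpace E] [NormedAddCommGroup F] [NormedSpace ℝ F] [CompleteSpace F]
    [MeasurableSpace F] [BorelSpace F] {X : ℕ → Ω → E}
    (hindep : Pairwise fun i j => IndepFun (X i) (X j) μ)
    (hident : ∀ m, IdentDistrib (X m) (X 0) μ μ) {f : E → F} (hf : Measurable f)
    (hint : Integrable (fun ω => f (X 0 ω)) μ) :
    ∀ᵐ ω ∂μ, Tendsto (fun M : ℕ => (M : ℝ)⁻¹ • ∑ m ∈ range M, f (X m ω)) atTop
      (𝓝 (∫ ω, f (X 0 ω) ∂μ)) :=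
  strong_law_ae (fun m ω => f (X m ω)) hint (fun _ _ hij => (hindep hij).comp hf hf)
    fun m => (hident m).comp hf

theorem integral_conj_sum_mul_sum {Ω ι : Type*} [MeasurableSpace Ω] {μ : Measure Ω}
    [DecidableEq ι] (s : Finset ι) (X : ι → Ω → ℂ) (a b σ : ι → ℂ)
    (hint : ∀ i ∈ s, ∀ j ∈ s, Integrable (fun ω => X i ω * conj (X j ω)) μ)
    (hcov : ∀ i ∈ s, ∀ j ∈ s, ∫ ω, X i ω * conj (X j ω) ∂μ = if i = j then σ i else 0) :
    ∫ ω, conj (∑ i ∈ s, X i ω * a i) * ∑ j ∈ s, X j ω * b j ∂μ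
      = ∑ i ∈ s, conj (a i) * b i * σ i := by
  have hexpand : ∀ ω, conj (∑ i ∈ s, X i ω * a i) * ∑ j ∈ s, X j ω * b j
      = ∑ i ∈ s, ∑ j ∈ s, conj (a i) * b j * (X j ω * conj (X i ω)) := by
    intro ω
    simp only [map_sum, map_mul, sum_mul_sum]
    exact sum_congr rfl fun i _ => sum_congr rfl fun j _ => by ring
  simp_rw [hexpand]
  rw [integral_finsetSum _ fun i hi => integrable_finsetSum _ fun j hj =>
    (hint j hj i hi).const_mul _]
  refine sum_congr rfl fun i hi => ?_
  rw [integral_finsetSum _ fun j hj => (hint j hj i hi).const_mul _]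
  simp_rw [integral_const_mul]
  rw [sum_congr rfl fun j hj => by rw [hcov j hj i hi], sum_eq_single_of_mem i hi]
  · simp
  · intro j _ hji
    simp [hji]

noncomputable def dftPhase (N p ℓ : ℕ) : ℂ :=
  Complex.exp (-(2 * (Real.pi : ℂ) * Complex.I * (ℓ : ℂ) * (p : ℂ)) / (N : ℂ))

theorem conj_dftPhase_mul_self (N p ℓ : ℕ) : conj (dftPhase N p ℓ) * dftPhase N p ℓ = 1 := by
  have : dftPhase N p ℓ = Complex.exp ((-(2 * Real.pi * ℓ * p / N) : ℝ) * Complex.I) := by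
    rw [dftPhase]
    push_cast
    ring_nf
  rw [Complex.conj_mul', this, Complex.norm_exp_ofReal_mul_I, Complex.ofReal_one, one_pow]

theorem hBar_eq_sum {Ω : Type*} (N L : ℕ) (h : ℕ → Ω → ℂ) (p : ℕ) (ω : Ω) :
    hBar N L h p ω = ∑ ℓ ∈ range L, h ℓ ω * dftPhase N p ℓ :=
  rfl

theorem card_filter_range_le (N ℓ : ℕ) : #{n ∈ range N | ℓ ≤ n} = N - ℓ := by
  rw [show {n ∈ range N | ℓ ≤ n} = Ico ℓ N by ext; simp [and_comm], Nat.card_Ico]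

/-- On the diagonal the ICI phase `e^{2πi(np-ℓp-np)/N}` no longer depends on `n`, so the sum over
`n` only counts the `N - ℓ` indices with `ℓ ≤ n`. -/
theorem Hici_diag {Ω : Type*} (N L : ℕ) (h : ℕ → Ω → ℂ) (p : ℕ) (ω : Ω) :
    Hici N L h p p ω = ∑ ℓ ∈ range L, h ℓ ω * (((N - ℓ : ℕ) : ℂ) / N * dftPhase N p ℓ) := by
  have hphase : ∀ n ℓ : ℕ, Complex.exp (2 * (Real.pi : ℂ) * Complex.I *
      ((((n * p : ℕ) : ℤ) - ((ℓ * p : ℕ) : ℤ) - ((n * p : ℕ) : ℤ) : ℤ) : ℂ) / (N : ℂ))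
      = dftPhase N p ℓ := by
    intro n ℓ
    rw [dftPhase]
    push_cast
    ring_nf
  simp only [Hici, hphase, mul_ite, mul_one, mul_zero]
  rw [sum_comm, mul_sum]
  refine sum_congr rfl fun _ _ => ?_
  rw [← sum_filter, sum_const, card_filter_range_le, nsmul_eq_mul]
  ring

noncomputable def diagCoeff {Ω : Type*} (N L p : ℕ) (h : ℕ → Ω → ℂ) (ω : Ω) : ℂ :=
  conj (hBar N L h p ω) * Hici N L h p p ω

theorem diagCoeff_eq_sum {Ω : Type*} (N L p : ℕ) (h : ℕ → Ω → ℂ) (ω : Ω) :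
    diagCoeff N L p h ω = conj (∑ ℓ ∈ range L, h ℓ ω * dftPhase N p ℓ) *
      ∑ ℓ ∈ range L, h ℓ ω * (((N - ℓ : ℕ) : ℂ) / N * dftPhase N p ℓ) := by
  rw [diagCoeff, hBar_eq_sum, Hici_diag]

theorem diagCoeff_congr {Ω Ω' : Type*} (N L p : ℕ) {h : ℕ → Ω → ℂ} {h' : ℕ → Ω' → ℂ}
    {ω : Ω} {ω' : Ω'} (hh : ∀ ℓ < L, h ℓ ω = h' ℓ ω') :
    diagCoeff N L p h ω = diagCoeff N L p h' ω' := by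
  have hsum_congr : ∀ c : ℕ → ℂ, ∑ ℓ ∈ range L, h ℓ ω * c ℓ = ∑ ℓ ∈ range L, h' ℓ ω' * c ℓ :=
    fun c => sum_congr rfl fun ℓ hℓ => by rw [hh ℓ (mem_range.1 hℓ)]
  rw [diagCoeff_eq_sum, diagCoeff_eq_sum, hsum_congr, hsum_congr]

/-- Taps read off a vector, so that `diagCoeff N L p (vecTaps L)` is `Y_m` as a function of the
tap vector `(h_m(ℓ))_{ℓ < L}`. -/
def vecTaps (L ℓ : ℕ) (v : Fin L → ℂ) : ℂ :=
  if hℓ : ℓ < L then v ⟨ℓ, hℓ⟩ else 0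

theorem measurable_vecTaps (L ℓ : ℕ) : Measurable (vecTaps L ℓ) := by
  unfold vecTaps
  split_ifs
  · exact measurable_pi_apply _
  · exact measurable_const

theorem measurable_diagCoeff_vecTaps (N L p : ℕ) : Measurable (diagCoeff N L p (vecTaps L)) := by
  simp_rw [funext (diagCoeff_eq_sum N L p (vecTaps L))]
  have := measurable_vecTaps L
  fun_prop

theorem diagCoeff_vecTaps {Ω : Type*} (N L p : ℕ) (h : ℕ → Ω → ℂ) (ω : Ω) :
    diagCoeff N L p (vecTaps L) (fun ℓ : Fin L => h ℓ ω) = diagCoeff N L p h ω :=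
  diagCoeff_congr N L p fun _ hℓ => dif_pos hℓ

theorem integral_diagCoeff {Ω : Type*} [MeasurableSpace Ω] {μ : Measure Ω} {N L : ℕ}
    (hN : 0 < N) (hLN : L ≤ N) {ρ : ℕ → ℝ} (hsum : ∑ ℓ ∈ range L, ρ ℓ = 1) {h : ℕ → Ω → ℂ}
    (hint : ∀ ℓ ℓ', ℓ < L → ℓ' < L →
      Integrable (fun ω => h ℓ ω * conj (h ℓ' ω)) μ)
    (hcov : ∀ ℓ ℓ', ℓ < L → ℓ' < L →
      ∫ ω, h ℓ ω * conj (h ℓ' ω) ∂μ = if ℓ = ℓ' then ((ρ ℓ : ℝ) : ℂ) else 0) (p : ℕ) :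
    ∫ ω, diagCoeff N L p h ω ∂μ = 1 - ((∑ ℓ ∈ range L, (ℓ : ℝ) * ρ ℓ : ℝ) : ℂ) / N := by
  simp_rw [diagCoeff_eq_sum]
  rw [integral_conj_sum_mul_sum _ _ _ _ (fun ℓ => (ρ ℓ : ℂ))
    (fun ℓ hℓ ℓ' hℓ' => hint ℓ ℓ' (mem_range.1 hℓ) (mem_range.1 hℓ'))
    (fun ℓ hℓ ℓ' hℓ' => hcov ℓ ℓ' (mem_range.1 hℓ) (mem_range.1 hℓ'))]
  have hN' : (N : ℂ) ≠ 0 := by exact_mod_cast hN.ne'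
  calc ∑ ℓ ∈ range L, conj (dftPhase N p ℓ) * (((N - ℓ : ℕ) : ℂ) / N * dftPhase N p ℓ) * ρ ℓ
      = ∑ ℓ ∈ range L, ((ρ ℓ : ℂ) - ℓ * ρ ℓ / N) := by
        refine sum_congr rfl fun ℓ hℓ => ?_
        rw [show ∀ c d r : ℂ, conj d * (c * d) * r = conj d * d * (c * r) from
            fun _ _ _ => by ring, conj_dftPhase_mul_self, one_mul,
          Nat.cast_sub ((mem_range.1 hℓ).le.trans hLN)]
        field_simp
    _ = 1 - ((∑ ℓ ∈ range L, (ℓ : ℝ) * ρ ℓ : ℝ) : ℂ) / N := by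
        rw [sum_sub_distrib, ← sum_div]
        push_cast
        rw [← Complex.ofReal_sum, hsum, Complex.ofReal_one]

theorem stmt5_general {Ω : Type*} [MeasurableSpace Ω] (μ : Measure Ω)
    (N L : ℕ) (hL1 : 1 ≤ L) (hLN : L ≤ N)
    (ρ : ℕ → ℝ) (hsum : ∑ ℓ ∈ range L, ρ ℓ = 1)
    (h : ℕ → ℕ → Ω → ℂ)
    (hindep : iIndepFun
      (fun m ω => fun ℓ : Fin L => h m ℓ ω) μ)
    (hident : ∀ m : ℕ, IdentDistrib (fun ω => fun ℓ : Fin L => h m ℓ ω)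
      (fun ω => fun ℓ : Fin L => h 0 ℓ ω) μ μ)
    (hint : ∀ m ℓ ℓ', ℓ < L → ℓ' < L →
      Integrable (fun ω => h m ℓ ω * (starRingEnd ℂ) (h m ℓ' ω)) μ)
    (hcov : ∀ m ℓ ℓ', ℓ < L → ℓ' < L →
      ∫ ω, h m ℓ ω * (starRingEnd ℂ) (h m ℓ' ω) ∂μ = if ℓ = ℓ' then ((ρ ℓ : ℝ) : ℂ) else 0)
    (p : ℕ)
    (hY : Integrable (fun ω =>
      (starRingEnd ℂ) (hBar N L (h 0) p ω) * Hici N L (h 0) p p ω) μ) :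
    ∀ᵐ ω ∂μ, Tendsto
      (fun M : ℕ => (M : ℂ)⁻¹ *
        ∑ m ∈ range M, (starRingEnd ℂ) (hBar N L (h m) p ω) * Hici N L (h m) p p ω)
      atTop
      (nhds (1 - ((∑ ℓ ∈ range L, (ℓ : ℝ) * ρ ℓ : ℝ) : ℂ) / (N : ℂ))) := by
  have hSLLN := ae_tendsto_average_comp (fun _ _ hij => hindep.indepFun hij) hident
    (measurable_diagCoeff_vecTaps N L p)
    (by simp only [diagCoeff_vecTaps]; exact hY)
  simp only [diagCoeff_vecTaps] at hSLLN
  rw [integral_diagCoeff (by omega) hLN hsum (hint 0) (hcov 0) p] at hSLLN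
  filter_upwards [hSLLN] with ω hω
  simpa only [Complex.real_smul, Complex.ofReal_inv, Complex.ofReal_natCast, diagCoeff] using hω

/-- Almost-sure convergence of the diagonal combining coefficient (equation (11a) with
(12a)): `(1/M)·∑_{m=0}^{M-1} conj(h̄_m(p))·H̄^{ICI}_{m,pp} → 1 - τ_av/N` almost surely. -/
theorem stmt5 {Ω : Type*} [MeasurableSpace Ω] (μ : Measure Ω) [IsProbabilityMeasure μ]
    (N L : ℕ) (hL1 : 1 ≤ L) (hLN : L ≤ N)
    (ρ : ℕ → ℝ) (hnn : ∀ ℓ, 0 ≤ ρ ℓ) (hsum : ∑ ℓ ∈ range L, ρ ℓ = 1)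
    (h : ℕ → ℕ → Ω → ℂ)
    (hindep : iIndepFun
      (fun m ω => fun ℓ : Fin L => h m ℓ ω) μ)
    (hident : ∀ m : ℕ, IdentDistrib (fun ω => fun ℓ : Fin L => h m ℓ ω)
      (fun ω => fun ℓ : Fin L => h 0 ℓ ω) μ μ)
    (hint : ∀ m ℓ ℓ', ℓ < L → ℓ' < L →
      Integrable (fun ω => h m ℓ ω * (starRingEnd ℂ) (h m ℓ' ω)) μ)
    (hmean : ∀ m ℓ, ℓ < L → ∫ ω, h m ℓ ω ∂μ = 0)
    (hcov : ∀ m ℓ ℓ', ℓ < L → ℓ' < L →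
      ∫ ω, h m ℓ ω * (starRingEnd ℂ) (h m ℓ' ω) ∂μ = if ℓ = ℓ' then ((ρ ℓ : ℝ) : ℂ) else 0)
    (p : ℕ) (hp : p < N)
    (hY : Integrable (fun ω =>
      (starRingEnd ℂ) (hBar N L (h 0) p ω) * Hici N L (h 0) p p ω) μ) :
    ∀ᵐ ω ∂μ, Tendsto
      (fun M : ℕ => (M : ℂ)⁻¹ *
        ∑ m ∈ range M, (starRingEnd ℂ) (hBar N L (h m) p ω) * Hici N L (h m) p p ω)
      atTop
      (nhds (1 - ((∑ ℓ ∈ range L, (ℓ : ℝ) * ρ ℓ : ℝ) : ℂ) / (N : ℂ))) :=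
  stmt5_general μ N L hL1 hLN ρ hsum h hindep hident hint hcov p hY
end
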